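/- arXiv:1903.00460 — 8 statements merged into one kernel-verified Lean document; each statement's English description precedes it below -/
import Mathlib

section
/- Let $d \ge 3$ and let $v_1,\dots,v_{d+4} \in \mathbb{C}^{d+1}$ be nonzero vectors representing points that lie on a rational normal curve of degree $d$ (no general position assumption is made). Then for every 6-element subset $I = \{i_1 < \cdots < i_6\}$ of $\{1,\dots,d+4\}$ with complement $I^c = \{j_1 < \cdots < j_{d-2}\}$ one has $[i_1 i_2 i_3 j_1 \cdots j_{d-2}][i_1 i_4 i_5 j_1 \cdots j_{d-2}][i_2 i_4 i_6 j_1 \cdots j_{d-2}][i_3 i_5 i_6 j_1 \cdots j_{d-2}] = [i_1 i_2 i_4 j_1 \cdots j_{d-2}][i_1 i_3 i_5 j_1 \cdots j_{d-2}][i_2 i_3 i_6 j_1 \cdots j_{d-2}][i_4 i_5 i_6 j_1 \cdots j_{d-2}]$. -/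
/-!
Writing `v k = λ_k • A (a_k^d, a_k^(d-1) b_k, …, b_k^d)`, every bracket factors as
`det A · ∏ λ · ∏_{s<t} (a_s b_t - a_t b_s)` (homogeneous Vandermonde). In `[p q r j₁ ⋯ j_{d-2}]`
the factors involving only the `j`'s are common to all eight brackets, each of `p, q, r`
contributes a factor depending on itself alone, and what remains is the product of the three
`2 × 2` minors of `p, q, r`. Both sides of the identity contain every point `i_s` twice and
the same twelve pairs `{i_s, i_t}`, so they agree.
-/

/-- The (nonzero) vectors `v₁, …, vₙ ∈ ℂ^(d+1)` represent points lying on a rational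
normal curve of degree `d` in `ℙ^d(ℂ)`. -/
def OnRNC (d n : ℕ) (v : Fin n → Fin (d + 1) → ℂ) : Prop :=
  ∃ (A : Matrix (Fin (d + 1)) (Fin (d + 1)) ℂ) (a b lam : Fin n → ℂ),
    IsUnit A ∧ (∀ k, (a k, b k) ≠ (0, 0)) ∧ (∀ k, lam k ≠ 0) ∧
    ∀ k, v k = lam k • A.mulVec (fun m => a k ^ (d - (m : ℕ)) * b k ^ (m : ℕ))

/-- The bracket `[k₁ k₂ ⋯ k_{d+1}]`: the determinant of the `(d+1) × (d+1)` matrix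
whose columns are `v (k 0), …, v (k d)` in that order. -/
noncomputable def brk {d n : ℕ} (v : Fin n → Fin (d + 1) → ℂ)
    (k : Fin (d + 1) → Fin n) : ℂ :=
  Matrix.det (Matrix.of fun r c => v (k c) r)

/-- The index list `(a, b, c, j₁, …, j_{d-2})` of length `d+1`. -/
def cat3 {d n : ℕ} (a b c : Fin n) (j : Fin (d - 2) → Fin n) : Fin (d + 1) → Fin n :=
  fun col =>
    if h : (col : ℕ) < 3 then ![a, b, c] ⟨col, h⟩
    else j ⟨(col : ℕ) - 3, by have := col.isLt; omega⟩

open Finset Matrix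

def pairDet {ι R : Type*} [CommRing R] (a b : ι → R) (s t : ι) : R :=
  a s * b t - a t * b s

theorem Fin.prod_prod_Ioi_cons {M ι : Type*} [CommMonoid M] {N : ℕ} (F : ι → ι → M)
    (x : ι) (k : Fin N → ι) :
    ∏ c, ∏ c' ∈ Ioi c,
        F ((Fin.cons x k : Fin (N + 1) → ι) c) ((Fin.cons x k : Fin (N + 1) → ι) c') =
      (∏ c, F x (k c)) * ∏ c, ∏ c' ∈ Ioi c, F (k c) (k c') := by
  rw [Fin.prod_univ_succ, Fin.prod_Ioi_zero]
  simp only [Fin.cons_zero, Fin.cons_succ, Fin.prod_Ioi_succ]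

theorem cat3_eq_cons {e n : ℕ} (p q r : Fin n) (j : Fin e → Fin n) :
    cat3 (d := e + 2) p q r j = Fin.cons p (Fin.cons q (Fin.cons r j)) := by
  funext ⟨c, hc⟩
  rcases c with _ | _ | _ | c
  iterate 3 rfl
  exact dif_neg (by simp)

theorem brk_eq_of_mulVec_monomials {d n : ℕ} {v : Fin n → Fin (d + 1) → ℂ}
    {A : Matrix (Fin (d + 1)) (Fin (d + 1)) ℂ} {a b lam : Fin n → ℂ}
    (hv : ∀ k, v k = lam k • A *ᵥ (fun m => a k ^ (d - (m : ℕ)) * b k ^ (m : ℕ)))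
    (κ : Fin (d + 1) → Fin n) :
    brk v κ = A.det * (∏ c, lam (κ c)) *
      ∏ c, ∏ c' ∈ Ioi c, pairDet a b (κ c) (κ c') := by
  have hmat : of (fun r c => v (κ c) r) =
      of fun r c => lam (κ c) * (A * (projVandermonde (b ∘ κ) (a ∘ κ))ᵀ) r c := by
    ext r c
    simp only [hv, of_apply, Pi.smul_apply, smul_eq_mul, mul_apply, mulVec, dotProduct,
      transpose_apply, projVandermonde_apply, Function.comp_apply, Fin.val_rev]
    congr 1
    refine sum_congr rfl fun m _ => ?_
    rw [mul_comm (b _ ^ _), show d + 1 - (m + 1) = d - m by omega]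
  rw [brk, hmat, det_mul_row, det_mul, det_transpose, det_projVandermonde]
  simp only [Function.comp_apply]
  rw [mul_left_comm, ← mul_assoc]
  exact congrArg _ <| prod_congr rfl fun c _ => prod_congr rfl fun c' _ => by rw [pairDet]; ring

theorem prod_four_triples_eq_of_factorization {M ι : Type*} [CommMonoid M]
    (B : ι → ι → ι → M) (C : M) (w : ι → M) (D : ι → ι → M)
    (hB : ∀ p q r, B p q r = C * w p * w q * w r * (D p q * D p r * D q r)) (x : Fin 6 → ι) :
    B (x 0) (x 1) (x 2) * B (x 0) (x 3) (x 4) * B (x 1) (x 3) (x 5) * B (x 2) (x 4) (x 5) =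
      B (x 0) (x 1) (x 3) * B (x 0) (x 2) (x 4) * B (x 1) (x 2) (x 5) * B (x 3) (x 4) (x 5) := by
  simp only [hB]
  ac_rfl

theorem brk_cat3_eq {e n : ℕ} {v : Fin n → Fin (e + 3) → ℂ}
    {A : Matrix (Fin (e + 3)) (Fin (e + 3)) ℂ} {a b lam : Fin n → ℂ}
    (hv : ∀ k, v k = lam k • A *ᵥ (fun m => a k ^ (e + 2 - (m : ℕ)) * b k ^ (m : ℕ)))
    (p q r : Fin n) (j : Fin e → Fin n) :
    brk v (cat3 p q r j) =
      (A.det * (∏ m, lam (j m)) * ∏ m, ∏ m' ∈ Ioi m, pairDet a b (j m) (j m')) *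
        (lam p * ∏ m, pairDet a b p (j m)) * (lam q * ∏ m, pairDet a b q (j m)) *
        (lam r * ∏ m, pairDet a b r (j m)) *
        (pairDet a b p q * pairDet a b p r * pairDet a b q r) := by
  rw [brk_eq_of_mulVec_monomials hv, cat3_eq_cons, Fin.prod_prod_Ioi_cons,
    Fin.prod_prod_Ioi_cons, Fin.prod_prod_Ioi_cons]
  simp only [Fin.prod_univ_succ, Fin.cons_zero, Fin.cons_succ]
  ring

theorem bracket_equations_of_rnc_general (d : ℕ) (hd : 3 ≤ d)
    (v : Fin (d + 4) → Fin (d + 1) → ℂ) (hrnc : OnRNC d (d + 4) v) :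
    ∀ (i : Fin 6 → Fin (d + 4)) (j : Fin (d - 2) → Fin (d + 4)),
      StrictMono i → StrictMono j →
      (∀ k : Fin (d + 4), (∃ a, i a = k) ↔ ¬ (∃ b, j b = k)) →
      brk v (cat3 (i 0) (i 1) (i 2) j) * brk v (cat3 (i 0) (i 3) (i 4) j) *
        brk v (cat3 (i 1) (i 3) (i 5) j) * brk v (cat3 (i 2) (i 4) (i 5) j) =
      brk v (cat3 (i 0) (i 1) (i 3) j) * brk v (cat3 (i 0) (i 2) (i 4) j) *
        brk v (cat3 (i 1) (i 2) (i 5) j) * brk v (cat3 (i 3) (i 4) (i 5) j) := by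
  obtain ⟨A, a, b, lam, -, -, -, hv⟩ := hrnc
  intro i j _ _ _
  -- for `d = e + 2`, `Fin (d - 2)` and `Fin (d + 1)` are definitionally `Fin e` and `Fin (e + 3)`
  obtain ⟨e, rfl⟩ : ∃ e, d = e + 2 := ⟨d - 2, by omega⟩
  exact prod_four_triples_eq_of_factorization (fun p q r => brk v (cat3 p q r j)) _ _ _
    (fun p q r => brk_cat3_eq hv p q r j) i

theorem bracket_equations_of_rnc (d : ℕ) (hd : 3 ≤ d)
    (v : Fin (d + 4) → Fin (d + 1) → ℂ) (hv : ∀ k, v k ≠ 0) (hrnc : OnRNC d (d + 4) v) :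
    ∀ (i : Fin 6 → Fin (d + 4)) (j : Fin (d - 2) → Fin (d + 4)),
      StrictMono i → StrictMono j →
      (∀ k : Fin (d + 4), (∃ a, i a = k) ↔ ¬ (∃ b, j b = k)) →
      brk v (cat3 (i 0) (i 1) (i 2) j) * brk v (cat3 (i 0) (i 3) (i 4) j) *
        brk v (cat3 (i 1) (i 3) (i 5) j) * brk v (cat3 (i 2) (i 4) (i 5) j) =
      brk v (cat3 (i 0) (i 1) (i 3) j) * brk v (cat3 (i 0) (i 2) (i 4) j) *
        brk v (cat3 (i 1) (i 2) (i 5) j) * brk v (cat3 (i 3) (i 4) (i 5) j) :=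
  bracket_equations_of_rnc_general d hd v hrnc
end

section
/- Let $d \ge 3$, let $v_1,\dots,v_{d+4} \in \mathbb{C}^{d+1}$ be in general linear position, let $I = \{i_1 < \cdots < i_6\} \subseteq \{1,\dots,d+4\}$ with complement $I^c = \{j_1 < \cdots < j_{d-2}\}$, and let $I^c = I_1 \sqcup I_2 \sqcup I_3 \sqcup I_4$ be any partition of $I^c$ (parts may be empty). Set $H_1 = \mathrm{span}(\{v_{i_4}, v_{i_5}\} \cup \{v_j : j \in I^c\})$, $H_2 = \mathrm{span}(\{v_{i_5}, v_{i_6}\} \cup \{v_j : j \in I^c\})$, $H_3 = \mathrm{span}(\{v_{i_6}, v_{i_1}\} \cup \{v_j : j \in I^c\})$, and let $W_1 = \mathrm{span}(\{v_{i_1}, v_{i_2}\} \cup \{v_j : j \in I_1\}) \cap H_1$, $W_2 = \mathrm{span}(\{v_{i_2}, v_{i_3}\} \cup \{v_j : j \in I_2\}) \cap H_2$, $W_3 = \mathrm{span}(\{v_{i_3}, v_{i_4}\} \cup \{v_j : j \in I_3\}) \cap H_3$, and $Q_1 = \mathrm{span}\{v_{i_1}, v_{i_2}\} \cap H_1$,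 $Q_2 = \mathrm{span}\{v_{i_2}, v_{i_3}\} \cap H_2$, $Q_3 = \mathrm{span}\{v_{i_3}, v_{i_4}\} \cap H_3$. Then $\dim\big(W_1 + W_2 + W_3 + \mathrm{span}\{v_j : j \in I_4\}\big) \le d$ if and only if $\dim\big(Q_1 + Q_2 + Q_3 + \mathrm{span}\{v_j : j \in I^c\}\big) \le d$. -/
/-- `v₁, …, vₙ ∈ ℂ^(d+1)` are in general linear position: every `d+1` of them are
linearly independent. -/
def GenLinPos (d n : ℕ) (v : Fin n → Fin (d + 1) → ℂ) : Prop :=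
  ∀ σ : Fin (d + 1) → Fin n, Function.Injective σ →
    LinearIndependent ℂ (fun k => v (σ k))

private lemma modular_inf_aux {R M : Type*} [Ring R] [AddCommGroup M] [Module R M]
    (A X H : Submodule R M) (h : X ≤ H) : (A ⊔ X) ⊓ H = (A ⊓ H) ⊔ X := by
  rw [sup_comm A X, sup_inf_assoc_of_le _ h, sup_comm]

/-- A partition `I^c = I₁ ⊔ I₂ ⊔ I₃ ⊔ I₄` (parts possibly empty) is encoded by a labelling
function `f : Fin (d-2) → Fin 4`; part `Iₘ` consists of the indices `j b` with `f b = m`. -/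
theorem equivalent_grassmann_cayley_formulations (d : ℕ) (hd : 3 ≤ d)
    (v : Fin (d + 4) → Fin (d + 1) → ℂ) (hgen : GenLinPos d (d + 4) v)
    (i : Fin 6 → Fin (d + 4)) (j : Fin (d - 2) → Fin (d + 4))
    (hi : StrictMono i) (hj : StrictMono j)
    (hcompl : ∀ k : Fin (d + 4), (∃ a, i a = k) ↔ ¬ (∃ b, j b = k))
    (f : Fin (d - 2) → Fin 4) :
    (Module.finrank ℂ
      ↥((Submodule.span ℂ ({v (i 0), v (i 1)} ∪ (fun b => v (j b)) '' {b | f b = 0}) ⊓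
           Submodule.span ℂ ({v (i 3), v (i 4)} ∪ Set.range (fun b => v (j b)))) ⊔
         (Submodule.span ℂ ({v (i 1), v (i 2)} ∪ (fun b => v (j b)) '' {b | f b = 1}) ⊓
           Submodule.span ℂ ({v (i 4), v (i 5)} ∪ Set.range (fun b => v (j b)))) ⊔
         (Submodule.span ℂ ({v (i 2), v (i 3)} ∪ (fun b => v (j b)) '' {b | f b = 2}) ⊓
           Submodule.span ℂ ({v (i 5), v (i 0)} ∪ Set.range (fun b => v (j b)))) ⊔
         Submodule.span ℂ ((fun b => v (j b)) '' {b | f b = 3})) ≤ d) ↔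
    (Module.finrank ℂ
      ↥((Submodule.span ℂ {v (i 0), v (i 1)} ⊓
           Submodule.span ℂ ({v (i 3), v (i 4)} ∪ Set.range (fun b => v (j b)))) ⊔
         (Submodule.span ℂ {v (i 1), v (i 2)} ⊓
           Submodule.span ℂ ({v (i 4), v (i 5)} ∪ Set.range (fun b => v (j b)))) ⊔
         (Submodule.span ℂ {v (i 2), v (i 3)} ⊓
           Submodule.span ℂ ({v (i 5), v (i 0)} ∪ Set.range (fun b => v (j b)))) ⊔
         Submodule.span ℂ (Set.range (fun b => v (j b)))) ≤ d) := by
  have hX : ∀ (m : Fin 4) (S : Set (Fin (d + 1) → ℂ)),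
      Submodule.span ℂ ((fun b => v (j b)) '' {b | f b = m}) ≤
        Submodule.span ℂ (S ∪ Set.range (fun b => v (j b))) := fun m S =>
    Submodule.span_mono ((Set.image_subset_range _ _).trans Set.subset_union_right)
  have hsp : ∀ (a b : Fin 6) (m : Fin 4) (S : Set (Fin (d + 1) → ℂ)),
      Submodule.span ℂ ({v (i a), v (i b)} ∪ (fun b => v (j b)) '' {b | f b = m}) ⊓
        Submodule.span ℂ (S ∪ Set.range (fun b => v (j b))) =
      (Submodule.span ℂ {v (i a), v (i b)} ⊓
        Submodule.span ℂ (S ∪ Set.range (fun b => v (j b)))) ⊔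
        Submodule.span ℂ ((fun b => v (j b)) '' {b | f b = m}) := by
    intro a b m S
    rw [Submodule.span_union, modular_inf_aux _ _ _ (hX m S)]
  rw [hsp, hsp, hsp]
  have hparts : Submodule.span ℂ ((fun b => v (j b)) '' {b | f b = 0}) ⊔
      Submodule.span ℂ ((fun b => v (j b)) '' {b | f b = 1}) ⊔
      Submodule.span ℂ ((fun b => v (j b)) '' {b | f b = 2}) ⊔
      Submodule.span ℂ ((fun b => v (j b)) '' {b | f b = 3}) =
      Submodule.span ℂ (Set.range (fun b => v (j b))) := by
    have hsets : {b | f b = 0} ∪ {b | f b = 1} ∪ {b | f b = 2} ∪ {b | f b = 3} =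
        (Set.univ : Set (Fin (d - 2))) := by
      have h4 : ∀ x : Fin 4, x = 0 ∨ x = 1 ∨ x = 2 ∨ x = 3 := by decide
      ext b
      simp only [Set.mem_union, Set.mem_setOf_eq, Set.mem_univ, iff_true]
      have := h4 (f b); tauto
    rw [← Submodule.span_union, ← Submodule.span_union, ← Submodule.span_union,
      ← Set.image_union, ← Set.image_union, ← Set.image_union, hsets, Set.image_univ]
  rw [show ∀ q1 q2 q3 x y z w : Submodule ℂ (Fin (d + 1) → ℂ),
      (q1 ⊔ x) ⊔ (q2 ⊔ y) ⊔ (q3 ⊔ z) ⊔ w = q1 ⊔ q2 ⊔ q3 ⊔ (x ⊔ y ⊔ z ⊔ w) from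
      fun _ _ _ _ _ _ _ => by ac_rfl, hparts]
end

section
/- Let $v_1,\dots,v_7 \in \mathbb{C}^4$ be such that every four of them are linearly independent. Let $I = \{i_1 < \cdots < i_6\} \subseteq \{1,\dots,7\}$ with complement $\{j\}$, and set $Q_1 = \mathrm{span}\{v_{i_1}, v_{i_2}\} \cap \mathrm{span}\{v_{i_4}, v_{i_5}, v_j\}$, $Q_2 = \mathrm{span}\{v_{i_2}, v_{i_3}\} \cap \mathrm{span}\{v_{i_5}, v_{i_6}, v_j\}$, $Q_3 = \mathrm{span}\{v_{i_3}, v_{i_4}\} \cap \mathrm{span}\{v_{i_6}, v_{i_1}, v_j\}$. Then each $Q_m$ has dimension exactly $1$, and $\dim(Q_1 + Q_2 + Q_3) = 3$; that is, the three corresponding points of $\mathbb{P}^3(\mathbb{C})$ are well defined and are not collinear. -/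
set_option maxHeartbeats 1000000 in

theorem three_intersection_points_not_collinear
    (v : Fin 7 → Fin 4 → ℂ)
    (hgen : ∀ σ : Fin 4 → Fin 7, Function.Injective σ →
      LinearIndependent ℂ (fun k => v (σ k)))
    (i : Fin 6 → Fin 7) (j : Fin 7) (hi : StrictMono i)
    (hcompl : ∀ k : Fin 7, (∃ a, i a = k) ↔ k ≠ j) :
    Module.finrank ℂ
        ↥(Submodule.span ℂ {v (i 0), v (i 1)} ⊓
          Submodule.span ℂ {v (i 3), v (i 4), v j}) = 1 ∧
    Module.finrank ℂ
        ↥(Submodule.span ℂ {v (i 1), v (i 2)} ⊓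
          Submodule.span ℂ {v (i 4), v (i 5), v j}) = 1 ∧
    Module.finrank ℂ
        ↥(Submodule.span ℂ {v (i 2), v (i 3)} ⊓
          Submodule.span ℂ {v (i 5), v (i 0), v j}) = 1 ∧
    Module.finrank ℂ
        ↥((Submodule.span ℂ {v (i 0), v (i 1)} ⊓
            Submodule.span ℂ {v (i 3), v (i 4), v j}) ⊔
          (Submodule.span ℂ {v (i 1), v (i 2)} ⊓
            Submodule.span ℂ {v (i 4), v (i 5), v j}) ⊔
          (Submodule.span ℂ {v (i 2), v (i 3)} ⊓
            Submodule.span ℂ {v (i 5), v (i 0), v j})) = 3 := by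
  have hii := hi.injective
  have hij : ∀ a : Fin 6, i a ≠ j := fun a => (hcompl (i a)).mp ⟨a, rfl⟩
  have hd : ∀ a b : Fin 6, a ≠ b → i a ≠ i b := fun a b h e => h (hii e)
  -- any 4 distinct indices give linearly independent vectors
  have quad : ∀ a b c d : Fin 7, a ≠ b → a ≠ c → a ≠ d → b ≠ c → b ≠ d → c ≠ d →
      LinearIndependent ℂ ![v a, v b, v c, v d] := by
    intro a b c d hab hac had hbc hbd hcd
    have hinj : Function.Injective ![a,b,c,d] := by
      intro x y hxy
      fin_cases x <;> fin_cases y <;> simp_all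
    have h2 : (fun k => v (![a,b,c,d] k)) = ![v a, v b, v c, v d] := by
      funext k; fin_cases k <;> rfl
    exact h2 ▸ hgen ![a,b,c,d] hinj
  -- subfamilies
  have pair2 : ∀ a b c d : Fin 4 → ℂ, LinearIndependent ℂ ![a,b,c,d] →
      LinearIndependent ℂ ![a,b] := by
    intro a b c d h
    have := h.comp ![0,1] (by intro x y hxy; fin_cases x <;> fin_cases y <;> simp_all)
    have h2 : (![a,b,c,d] ∘ ![0,1]) = ![a,b] := by funext k; fin_cases k <;> rfl
    exact h2 ▸ this
  have tri3 : ∀ a b c d : Fin 4 → ℂ, LinearIndependent ℂ ![a,b,c,d] →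
      LinearIndependent ℂ ![b,c,d] := by
    intro a b c d h
    have := h.comp ![1,2,3] (by intro x y hxy; fin_cases x <;> fin_cases y <;> simp_all)
    have h2 : (![a,b,c,d] ∘ ![1,2,3]) = ![b,c,d] := by funext k; fin_cases k <;> rfl
    exact h2 ▸ this
  have notmem : ∀ a b c d : Fin 4 → ℂ, LinearIndependent ℂ ![a,b,c,d] →
      a ∉ Submodule.span ℂ ({b,c,d} : Set (Fin 4 → ℂ)) := by
    intro a b c d h
    have h2 : Set.range ![b,c,d] = {b,c,d} := by
      simp [Matrix.range_cons, Matrix.range_empty]; ext y; simp; tauto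
    rw [← h2]
    exact (linearIndependent_fin_cons.mp h).2
  -- ranks of spans
  have rpair : ∀ a b : Fin 4 → ℂ, LinearIndependent ℂ ![a,b] →
      Module.finrank ℂ (Submodule.span ℂ ({a,b} : Set (Fin 4 → ℂ))) = 2 := by
    intro a b h
    have h2 : Set.range ![a,b] = {a,b} := by
      simp [Matrix.range_cons, Matrix.range_empty]; ext y; simp; tauto
    rw [← h2, finrank_span_eq_card h]; simp
  have rtri : ∀ a b c : Fin 4 → ℂ, LinearIndependent ℂ ![a,b,c] →
      Module.finrank ℂ (Submodule.span ℂ ({a,b,c} : Set (Fin 4 → ℂ))) = 3 := by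
    intro a b c h
    have h2 : Set.range ![a,b,c] = {a,b,c} := by
      simp [Matrix.range_cons, Matrix.range_empty]; ext y; simp; tauto
    rw [← h2, finrank_span_eq_card h]; simp
  have rquadtop : ∀ a b c d : Fin 4 → ℂ, LinearIndependent ℂ ![a,b,c,d] →
      Submodule.span ℂ ({a,b,c,d} : Set (Fin 4 → ℂ)) = ⊤ := by
    intro a b c d h
    apply Submodule.eq_top_of_finrank_eq
    have h2 : Set.range ![a,b,c,d] = {a,b,c,d} := by
      simp [Matrix.range_cons, Matrix.range_empty]; ext y; simp; tauto
    rw [← h2, finrank_span_eq_card h]; simp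
  have h4top : Module.finrank ℂ (⊤ : Submodule ℂ (Fin 4 → ℂ)) = 4 := by simp
  -- generic rank-1 intersection lemma
  have key1 : ∀ a b c d e : Fin 4 → ℂ, LinearIndependent ℂ ![a,b] →
      LinearIndependent ℂ ![c,d,e] →
      Submodule.span ℂ ({a,b,c,d} : Set (Fin 4 → ℂ)) = ⊤ →
      Module.finrank ℂ
        ↥(Submodule.span ℂ ({a,b} : Set (Fin 4 → ℂ)) ⊓
          Submodule.span ℂ ({c,d,e} : Set (Fin 4 → ℂ))) = 1 := by
    intro a b c d e hab hcde htop
    have hsup : Submodule.span ℂ ({a,b} : Set (Fin 4 → ℂ)) ⊔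
        Submodule.span ℂ ({c,d,e} : Set (Fin 4 → ℂ)) = ⊤ := by
      rw [← Submodule.span_union, eq_top_iff, ← htop]
      exact Submodule.span_mono (by intro x hx; simp at hx ⊢; tauto)
    have heq := Submodule.finrank_sup_add_finrank_inf_eq
      (Submodule.span ℂ ({a,b} : Set (Fin 4 → ℂ)))
      (Submodule.span ℂ ({c,d,e} : Set (Fin 4 → ℂ)))
    rw [hsup, h4top, rpair a b hab, rtri c d e hcde] at heq
    omega
  -- the three intersection submodules
  set Q1 := Submodule.span ℂ ({v (i 0), v (i 1)} : Set (Fin 4 → ℂ)) ⊓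
      Submodule.span ℂ ({v (i 3), v (i 4), v j} : Set (Fin 4 → ℂ)) with hQ1def
  set Q2 := Submodule.span ℂ ({v (i 1), v (i 2)} : Set (Fin 4 → ℂ)) ⊓
      Submodule.span ℂ ({v (i 4), v (i 5), v j} : Set (Fin 4 → ℂ)) with hQ2def
  set Q3 := Submodule.span ℂ ({v (i 2), v (i 3)} : Set (Fin 4 → ℂ)) ⊓
      Submodule.span ℂ ({v (i 5), v (i 0), v j} : Set (Fin 4 → ℂ)) with hQ3def
  have qA := quad (i 0) (i 1) (i 3) (i 4) (hd 0 1 (by decide)) (hd 0 3 (by decide))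
    (hd 0 4 (by decide)) (hd 1 3 (by decide)) (hd 1 4 (by decide)) (hd 3 4 (by decide))
  have qA' := quad (i 0) (i 3) (i 4) j (hd 0 3 (by decide)) (hd 0 4 (by decide))
    (hij 0) (hd 3 4 (by decide)) (hij 3) (hij 4)
  have qB := quad (i 1) (i 2) (i 4) (i 5) (hd 1 2 (by decide)) (hd 1 4 (by decide))
    (hd 1 5 (by decide)) (hd 2 4 (by decide)) (hd 2 5 (by decide)) (hd 4 5 (by decide))
  have qB' := quad (i 1) (i 4) (i 5) j (hd 1 4 (by decide)) (hd 1 5 (by decide))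
    (hij 1) (hd 4 5 (by decide)) (hij 4) (hij 5)
  have qC := quad (i 2) (i 3) (i 5) (i 0) (hd 2 3 (by decide)) (hd 2 5 (by decide))
    (hd 2 0 (by decide)) (hd 3 5 (by decide)) (hd 3 0 (by decide)) (hd 5 0 (by decide))
  have qC' := quad (i 2) (i 5) (i 0) j (hd 2 5 (by decide)) (hd 2 0 (by decide))
    (hij 2) (hd 5 0 (by decide)) (hij 5) (hij 0)
  have qM := quad (i 0) (i 1) (i 2) (i 3) (hd 0 1 (by decide)) (hd 0 2 (by decide))
    (hd 0 3 (by decide)) (hd 1 2 (by decide)) (hd 1 3 (by decide)) (hd 2 3 (by decide))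
  have r1 : Module.finrank ℂ Q1 = 1 :=
    key1 _ _ _ _ _ (pair2 _ _ _ _ qA) (tri3 _ _ _ _ qA') (rquadtop _ _ _ _ qA)
  have r2 : Module.finrank ℂ Q2 = 1 :=
    key1 _ _ _ _ _ (pair2 _ _ _ _ qB) (tri3 _ _ _ _ qB') (rquadtop _ _ _ _ qB)
  have r3 : Module.finrank ℂ Q3 = 1 :=
    key1 _ _ _ _ _ (pair2 _ _ _ _ qC) (tri3 _ _ _ _ qC') (rquadtop _ _ _ _ qC)
  refine ⟨r1, r2, r3, ?_⟩
  -- pick nonzero vectors in each Q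
  have getq : ∀ Q : Submodule ℂ (Fin 4 → ℂ), Module.finrank ℂ Q = 1 →
      ∃ x ∈ Q, x ≠ 0 := by
    intro Q hQ
    apply (Submodule.ne_bot_iff Q).mp
    intro h; rw [h] at hQ; simp at hQ
  obtain ⟨q1, hq1, hq1ne⟩ := getq Q1 r1
  obtain ⟨q2, hq2, hq2ne⟩ := getq Q2 r2
  obtain ⟨q3, hq3, hq3ne⟩ := getq Q3 r3
  obtain ⟨hq1L, hq1R⟩ := Submodule.mem_inf.mp hq1
  obtain ⟨hq2L, hq2R⟩ := Submodule.mem_inf.mp hq2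
  obtain ⟨hq3L, hq3R⟩ := Submodule.mem_inf.mp hq3
  obtain ⟨a0, a1, ha⟩ := Submodule.mem_span_pair.mp hq1L
  obtain ⟨b1, b2, hb⟩ := Submodule.mem_span_pair.mp hq2L
  obtain ⟨c2, c3, hc⟩ := Submodule.mem_span_pair.mp hq3L
  -- a0 ≠ 0
  have ha0 : a0 ≠ 0 := by
    intro h
    rw [h, zero_smul, zero_add] at ha
    have ha1 : a1 ≠ 0 := by rintro rfl; rw [zero_smul] at ha; exact hq1ne ha.symm
    have : v (i 1) ∈ Submodule.span ℂ ({v (i 3), v (i 4), v j} : Set (Fin 4 → ℂ)) := by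
      have := Submodule.smul_mem _ a1⁻¹ hq1R
      rwa [← ha, smul_smul, inv_mul_cancel₀ ha1, one_smul] at this
    exact notmem _ _ _ _ (quad (i 1) (i 3) (i 4) j (hd 1 3 (by decide)) (hd 1 4 (by decide))
      (hij 1) (hd 3 4 (by decide)) (hij 3) (hij 4)) this
  -- c3 ≠ 0
  have hc3 : c3 ≠ 0 := by
    intro h
    rw [h, zero_smul, add_zero] at hc
    have hc2 : c2 ≠ 0 := by rintro rfl; rw [zero_smul] at hc; exact hq3ne hc.symm
    have : v (i 2) ∈ Submodule.span ℂ ({v (i 5), v (i 0), v j} : Set (Fin 4 → ℂ)) := by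
      have := Submodule.smul_mem _ c2⁻¹ hq3R
      rwa [← hc, smul_smul, inv_mul_cancel₀ hc2, one_smul] at this
    exact notmem _ _ _ _ qC' this
  -- q1, q2, q3 are linearly independent
  have hli : LinearIndependent ℂ ![q1, q2, q3] := by
    rw [Fintype.linearIndependent_iff]
    intro g hg
    rw [Fin.sum_univ_three] at hg
    simp only [Matrix.cons_val_zero, Matrix.cons_val_one, Matrix.head_cons,
      Matrix.cons_val_two, Matrix.tail_cons] at hg
    have hcoef : (g 0 * a0) • v (i 0) + (g 0 * a1 + g 1 * b1) • v (i 1) +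
        (g 1 * b2 + g 2 * c2) • v (i 2) + (g 2 * c3) • v (i 3) = 0 := by
      rw [← ha, ← hb, ← hc] at hg
      linear_combination (norm := module) hg
    have hW := Fintype.linearIndependent_iff.mp qM
      ![g 0 * a0, g 0 * a1 + g 1 * b1, g 1 * b2 + g 2 * c2, g 2 * c3]
      (by rw [Fin.sum_univ_four]; simpa using hcoef)
    have h0 : g 0 = 0 := by
      have := hW 0; simp at this
      rcases this with h | h
      · exact h
      · exact absurd h ha0
    have h2 : g 2 = 0 := by
      have := hW 3; simp at this
      rcases this with h | h
      · exact h
      · exact absurd h hc3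
    have h1 : g 1 = 0 := by
      rw [h0, h2, zero_smul, zero_smul, zero_add, add_zero] at hg
      rcases smul_eq_zero.mp hg with h | h
      · exact h
      · exact absurd h hq2ne
    intro k; fin_cases k <;> assumption
  -- lower bound
  have hsub : Submodule.span ℂ ({q1, q2, q3} : Set (Fin 4 → ℂ)) ≤ Q1 ⊔ Q2 ⊔ Q3 := by
    rw [Submodule.span_le]
    rintro x hx
    simp only [Set.mem_insert_iff, Set.mem_singleton_iff] at hx
    rcases hx with rfl | rfl | rfl
    · exact Submodule.mem_sup_left (Submodule.mem_sup_left hq1)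
    · exact Submodule.mem_sup_left (Submodule.mem_sup_right hq2)
    · exact Submodule.mem_sup_right hq3
  have hlow : 3 ≤ Module.finrank ℂ ↥(Q1 ⊔ Q2 ⊔ Q3) := by
    have := Submodule.finrank_mono hsub
    rwa [rtri _ _ _ hli] at this
  -- upper bound
  have hsup_le : ∀ p q : Submodule ℂ (Fin 4 → ℂ),
      Module.finrank ℂ ↥(p ⊔ q) ≤ Module.finrank ℂ p + Module.finrank ℂ q := by
    intro p q
    have := Submodule.finrank_sup_add_finrank_inf_eq p q
    omega
  have hup : Module.finrank ℂ ↥(Q1 ⊔ Q2 ⊔ Q3) ≤ 3 := by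
    have h1 := hsup_le (Q1 ⊔ Q2) Q3
    have h2 := hsup_le Q1 Q2
    omega
  omega
end

section
/- Fix integers $d \ge 1$ and $1 \le s \le d$, a finite set $J \subset \mathbb{N}$ with $|J| \ge d$, and $j \in \mathbb{N} \setminus J$. Let $\alpha \in J^{s-1}$, $\beta \in J^{d+1}$, $\gamma \in J^{d-s}$ be lists of elements of $J$, and let $\beta' \in (J \cup \{j\})^{d+2}$ and $\gamma' \in (J \cup \{j\})^{d+1-s}$ be obtained from $\beta$ and $\gamma$ respectively by appending $j$ as the last entry. Then $\eta_j([[\alpha\,\beta^\bullet\,\gamma]]) = [[\alpha\,\beta'^\bullet\,\gamma']]$, where the left-hand van der Waerden polynomial is computed in $R_{J,d}$ (with parameter $s$) and the right-hand one in $R_{J\cup\{j\},d+1}$ (with the same parameter $s$). -/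
/-- The shuffle permutation `(τ₁, …, τ_s, τ*₁, …, τ*_{n-s})` of `(1, …, n)` determined by
an `s`-element subset `T` of `Fin n` (listing `T` in increasing order followed by its
complement in increasing order). -/
noncomputable def shuffle {n s : ℕ} (T : Finset (Fin n)) (hT : T.card = s) :
    Equiv.Perm (Fin n) := by
  have hTc : Tᶜ.card = n - s := by
    rw [Finset.card_compl, hT, Fintype.card_fin]
  refine Equiv.ofBijective
    (fun k => if h : (k : ℕ) < s then (T.orderIsoOfFin hT ⟨(k : ℕ), h⟩ : Fin n)
      else (Tᶜ.orderIsoOfFin hTc ⟨(k : ℕ) - s, by have := k.isLt; omega⟩ : Fin n))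
    (Finite.injective_iff_bijective.mp ?_)
  intro p q hpq
  by_cases hp : (p : ℕ) < s <;> by_cases hq : (q : ℕ) < s <;>
    simp only [hp, hq, dif_pos, dif_neg, not_false_iff] at hpq
  · have h1 : (⟨(p : ℕ), hp⟩ : Fin s) = ⟨(q : ℕ), hq⟩ :=
      (T.orderIsoOfFin hT).injective (Subtype.ext hpq)
    exact Fin.ext (congrArg (@Fin.val s) h1)
  · exfalso
    have h1 := ((T.orderIsoOfFin hT) ⟨(p : ℕ), hp⟩).2
    have h2 := ((Tᶜ.orderIsoOfFin hTc) ⟨(q : ℕ) - s, by have := q.isLt; omega⟩).2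
    rw [hpq] at h1
    exact (Finset.mem_compl.mp h2) h1
  · exfalso
    have h1 := ((T.orderIsoOfFin hT) ⟨(q : ℕ), hq⟩).2
    have h2 := ((Tᶜ.orderIsoOfFin hTc) ⟨(p : ℕ) - s, by have := p.isLt; omega⟩).2
    rw [← hpq] at h1
    exact (Finset.mem_compl.mp h2) h1
  · have h1 : (⟨(p : ℕ) - s, by have := p.isLt; omega⟩ : Fin (n - s)) =
        ⟨(q : ℕ) - s, by have := q.isLt; omega⟩ :=
      (Tᶜ.orderIsoOfFin hTc).injective (Subtype.ext hpq)
    have h2 : (p : ℕ) - s = (q : ℕ) - s := congrArg (@Fin.val (n - s)) h1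
    exact Fin.ext (by omega)

/-- The polynomial ring `R_{J,d}` over `ℂ` with one variable `X_S` for each `d`-element
subset `S ⊆ J`. -/
abbrev BracketRing (J : Finset ℕ) (d : ℕ) : Type :=
  MvPolynomial {S : Finset ℕ // S ⊆ J ∧ S.card = d} ℂ

/-- The formal bracket `[λ₁ ⋯ λ_d] ∈ R_{J,d}`: zero if the entries are not pairwise
distinct, and otherwise `sign π • X_{{λ₁,…,λ_d}}` where `π` is the permutation sorting
the list into increasing order. -/
noncomputable def fbr (J : Finset ℕ) (d : ℕ) (lam : Fin d → ℕ) : BracketRing J d :=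
  if h : Function.Injective lam ∧ ∀ k, lam k ∈ J then
    have hsub : Finset.image lam Finset.univ ⊆ J := by
      intro x hx
      obtain ⟨k, _, rfl⟩ := Finset.mem_image.mp hx
      exact h.2 k
    have hcard : (Finset.image lam Finset.univ).card = d := by
      rw [Finset.card_image_of_injective _ h.1, Finset.card_univ, Fintype.card_fin]
    let e := (Finset.image lam Finset.univ).orderIsoOfFin hcard
    let π : Fin d → Fin d := fun k =>
      e.symm ⟨lam k, Finset.mem_image_of_mem _ (Finset.mem_univ k)⟩
    have hπ : Function.Bijective π := by
      apply Finite.injective_iff_bijective.mp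
      intro p q hpq
      exact h.1 (congrArg Subtype.val (e.symm.injective hpq))
    ((Equiv.Perm.sign (Equiv.ofBijective π hπ) : ℤ)) •
      MvPolynomial.X ⟨Finset.image lam Finset.univ, hsub, hcard⟩
  else 0

/-- The van der Waerden bracket polynomial `[[α β• γ]] ∈ R_{J,d}` (with parameter `s`). -/
noncomputable def vdW (J : Finset ℕ) (d s : ℕ)
    (α : Fin (s - 1) → ℕ) (β : Fin (d + 1) → ℕ) (γ : Fin (d - s) → ℕ) :
    BracketRing J d :=
  ∑ T : {T : Finset (Fin (d + 1)) // T.card = s},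
    have hTc : (T.1)ᶜ.card = d + 1 - s := by
      rw [Finset.card_compl, T.2, Fintype.card_fin]
    ((Equiv.Perm.sign (shuffle T.1 T.2) : ℤ)) •
      (fbr J d (fun k =>
          if h : (k : ℕ) < s - 1 then α ⟨(k : ℕ), h⟩
          else β ((T.1)ᶜ.orderIsoOfFin hTc
            ⟨(k : ℕ) - (s - 1), by have := k.isLt; omega⟩)) *
       fbr J d (fun k =>
          if h : (k : ℕ) < s then β (T.1.orderIsoOfFin T.2 ⟨(k : ℕ), h⟩)
          else γ ⟨(k : ℕ) - s, by have := k.isLt; omega⟩))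

/-- The lift `η_j : R_{J,d} → R_{J∪{j},d+1}`, sending `X_S` (with
`S = {s₁ < ⋯ < s_d}`) to the formal bracket `[s₁ ⋯ s_d j]`. -/
noncomputable def liftEta (J : Finset ℕ) (d : ℕ) (j : ℕ) :
    BracketRing J d →ₐ[ℂ] BracketRing (insert j J) (d + 1) :=
  MvPolynomial.aeval (fun S : {S : Finset ℕ // S ⊆ J ∧ S.card = d} =>
    fbr (insert j J) (d + 1) (fun k =>
      if h : (k : ℕ) < d then S.1.orderEmbOfFin S.2.2 ⟨(k : ℕ), h⟩ else j))

/-- The generic coordinatization `φ_{J,d}`, sending `X_S` (with `S = {s₁ < ⋯ < s_d}`) to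
the determinant of the `d × d` matrix `(x_{i, s_m})`. -/
noncomputable def genCoord (J : Finset ℕ) (d : ℕ) :
    BracketRing J d →ₐ[ℂ] MvPolynomial (ℕ × ℕ) ℂ :=
  MvPolynomial.aeval (fun S : {S : Finset ℕ // S ⊆ J ∧ S.card = d} =>
    Matrix.det (Matrix.of fun i m : Fin d =>
      MvPolynomial.X ((i : ℕ), (S.1.orderEmbOfFin S.2.2 m : ℕ))))

/-!
The lift `η_j` is multiplicative and sends a bracket `[λ₁ ⋯ λ_d]` to `[λ₁ ⋯ λ_d j]` (both sides
vanish together, and appending `j` extends the sorting permutation by a fixed point). In the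
expansion of `[[α β'• γ']]`, a shuffle `τ` containing the new last position of `β'` picks the
entry `j` into the second bracket, which already ends with the `j` of `γ'`, so the term vanishes.
The remaining shuffles are exactly those of `[[α β• γ]]`, with the same signs, and their two
brackets are the brackets of the original term with `j` appended.
-/

open Equiv Function

lemma Equiv.Perm.sign_eq_of_castSucc {n : ℕ} (σ : Perm (Fin n)) (σ' : Perm (Fin (n + 1)))
    (h : ∀ i, σ' i.castSucc = (σ i).castSucc) : Perm.sign σ' = Perm.sign σ := by
  have hlast : σ' (Fin.last n) = Fin.last n := by
    by_contra hne
    obtain ⟨i, hi⟩ := Fin.exists_castSucc_eq.mpr hne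
    have := σ'.injective (hi.symm.trans (by rw [h, σ.apply_symm_apply]) :
      σ' (Fin.last n) = σ' (σ.symm i).castSucc)
    exact Fin.castSucc_ne_last _ this.symm
  have hσ' : σ' = σ.viaFintypeEmbedding Fin.castSuccEmb := by
    refine Equiv.ext fun x => ?_
    induction x using Fin.lastCases with
    | last =>
      rw [hlast, Perm.viaFintypeEmbedding_apply_notMem_range]
      simp
    | cast i => exact (h i).trans (σ.viaFintypeEmbedding_apply_image Fin.castSuccEmb i).symm
  rw [hσ', Perm.viaFintypeEmbedding_sign]

section Bracket

variable {J : Finset ℕ} {d : ℕ}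

lemma fbr_eq_zero_of_not (lam : Fin d → ℕ) (h : ¬(Injective lam ∧ ∀ k, lam k ∈ J)) :
    fbr J d lam = 0 :=
  dif_neg h

lemma fbr_eq_sign_smul_X (lam : Fin d → ℕ) (S : {S : Finset ℕ // S ⊆ J ∧ S.card = d})
    (σ : Perm (Fin d)) (h : ∀ k, lam k = S.1.orderEmbOfFin S.2.2 (σ k)) :
    fbr J d lam = (Perm.sign σ : ℤ) • MvPolynomial.X S := by
  obtain ⟨S, hSJ, hS⟩ := S
  have hinj : Injective lam := by
    rw [funext h]; exact (S.orderEmbOfFin hS).injective.comp σ.injective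
  have himage : Finset.image lam Finset.univ = S := by
    ext x
    simp only [h, Finset.mem_image, Finset.mem_univ, true_and]
    refine ⟨fun ⟨k, hk⟩ => hk ▸ S.orderEmbOfFin_mem hS _, fun hx => ?_⟩
    obtain ⟨k, rfl⟩ : x ∈ Set.range (S.orderEmbOfFin hS) := by simpa using hx
    exact ⟨σ.symm k, by simp⟩
  rw [fbr, dif_pos ⟨hinj, fun k => h k ▸ hSJ (S.orderEmbOfFin_mem hS _)⟩]
  subst himage
  dsimp only
  congr 3
  refine Equiv.ext fun k => ?_
  simp only [Equiv.ofBijective_apply]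
  rw [OrderIso.symm_apply_eq]
  exact Subtype.ext (h k)

lemma exists_eq_orderEmbOfFin_comp (lam : Fin d → ℕ) (hinj : Injective lam)
    (hJ : ∀ k, lam k ∈ J) : ∃ (S : {S : Finset ℕ // S ⊆ J ∧ S.card = d}) (σ : Perm (Fin d)),
      ∀ k, lam k = S.1.orderEmbOfFin S.2.2 (σ k) := by
  have hS : (Finset.image lam Finset.univ).card = d := by
    rw [Finset.card_image_of_injective _ hinj, Finset.card_fin]
  let e := (Finset.image lam Finset.univ).orderIsoOfFin hS
  let σ : Fin d → Fin d := fun k => e.symm ⟨lam k, by simp⟩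
  have hσ : Injective σ := fun p q hpq => hinj (congrArg Subtype.val (e.symm.injective hpq))
  refine ⟨⟨_, by simpa [Finset.image_subset_iff] using hJ, hS⟩,
    Equiv.ofBijective σ (Finite.injective_iff_bijective.mp hσ), fun k => ?_⟩
  simp [σ, e, ← Finset.coe_orderIsoOfFin_apply]

lemma fbr_comp_perm (lam : Fin d → ℕ) (σ : Perm (Fin d)) :
    fbr J d (lam ∘ σ) = (Perm.sign σ : ℤ) • fbr J d lam := by
  by_cases h : Injective lam ∧ ∀ k, lam k ∈ J
  · obtain ⟨S, τ, hτ⟩ := exists_eq_orderEmbOfFin_comp lam h.1 h.2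
    rw [fbr_eq_sign_smul_X lam S τ hτ, fbr_eq_sign_smul_X (lam ∘ σ) S (σ.trans τ) (fun k => hτ _),
      smul_smul, Perm.sign_trans, mul_comm, Units.val_mul]
  · have h' : ¬(Injective (lam ∘ σ) ∧ ∀ k, (lam ∘ σ) k ∈ J) := by
      rintro ⟨hinj, hJ⟩
      exact h ⟨(Injective.of_comp_iff' lam σ.bijective).mp hinj,
        fun k => by simpa using hJ (σ.symm k)⟩
    rw [fbr_eq_zero_of_not _ h, fbr_eq_zero_of_not _ h', smul_zero]

lemma fbr_eq_zero_of_apply_eq (lam : Fin d → ℕ) {a b : Fin d} (hab : a ≠ b)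
    (h : lam a = lam b) : fbr J d lam = 0 :=
  fbr_eq_zero_of_not lam fun hl => hab (hl.1 h)

end Bracket

lemma liftEta_fbr {J : Finset ℕ} {d : ℕ} (j : ℕ) (lam : Fin d → ℕ) :
    liftEta J d j (fbr J d lam) = fbr (insert j J) (d + 1) (Fin.snoc lam j) := by
  by_cases h : Injective lam ∧ ∀ k, lam k ∈ J
  · obtain ⟨S, σ, hσ⟩ := exists_eq_orderEmbOfFin_comp lam h.1 h.2
    have hsnoc : (Fin.snoc lam j : Fin (d + 1) → ℕ) =
        (fun k : Fin (d + 1) => if h : (k : ℕ) < d then S.1.orderEmbOfFin S.2.2 ⟨k, h⟩ else j) ∘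
          σ.viaFintypeEmbedding Fin.castSuccEmb := by
      funext k
      induction k using Fin.lastCases with
      | last =>
        rw [comp_apply, Perm.viaFintypeEmbedding_apply_notMem_range _ _ (by simp)]
        simp
      | cast i =>
        rw [comp_apply, ← Fin.castSuccEmb_apply, Perm.viaFintypeEmbedding_apply_image]
        simp [hσ]
    rw [fbr_eq_sign_smul_X lam S σ hσ, map_zsmul, liftEta, MvPolynomial.aeval_X, hsnoc,
      fbr_comp_perm, Perm.viaFintypeEmbedding_sign]
  · rw [fbr_eq_zero_of_not lam h, map_zero, fbr_eq_zero_of_not]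
    rintro ⟨hinj, hmem⟩
    have hlam_ne : ∀ k, lam k ≠ j := fun k hk =>
      Fin.castSucc_ne_last k (hinj (by simpa using hk))
    refine h ⟨fun a b hab => Fin.castSucc_injective d (hinj (by simpa using hab)), fun k => ?_⟩
    simpa [hlam_ne k] using hmem k.castSucc

section CastSucc

variable {n s : ℕ}

lemma card_compl_of_card_eq {T : Finset (Fin n)} (hT : T.card = s) : Tᶜ.card = n - s := by
  rw [Finset.card_compl, hT, Fintype.card_fin]

lemma shuffle_apply (T : Finset (Fin n)) (hT : T.card = s) (k : Fin n) :
    shuffle T hT k = if h : (k : ℕ) < s then T.orderEmbOfFin hT ⟨k, h⟩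
      else Tᶜ.orderEmbOfFin (card_compl_of_card_eq hT) ⟨k - s, by omega⟩ :=
  rfl

lemma orderEmbOfFin_map_castSuccEmb (T : Finset (Fin n)) (hT : T.card = s)
    (hT' : (T.map Fin.castSuccEmb).card = s) (i : Fin s) :
    (T.map Fin.castSuccEmb).orderEmbOfFin hT' i = (T.orderEmbOfFin hT i).castSucc := by
  exact (congrFun (Finset.orderEmbOfFin_unique hT' (f := fun i => (T.orderEmbOfFin hT i).castSucc)
    (by simp) (Fin.strictMono_castSucc.comp (T.orderEmbOfFin hT).strictMono)) i).symm

lemma orderEmbOfFin_compl_map_castSuccEmb {m m' : ℕ} (T : Finset (Fin n)) (hTc : Tᶜ.card = m)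
    (hTc' : (T.map Fin.castSuccEmb)ᶜ.card = m') (i : Fin m') :
    (T.map Fin.castSuccEmb)ᶜ.orderEmbOfFin hTc' i =
      if h : (i : ℕ) < m then (Tᶜ.orderEmbOfFin hTc ⟨i, h⟩).castSucc else Fin.last n := by
  have hm' : m' = m + 1 := by
    have := T.card_le_univ
    rw [Finset.card_compl] at hTc hTc'
    simp only [Finset.card_map, Fintype.card_fin] at hTc hTc' this
    omega
  refine (congrFun (Finset.orderEmbOfFin_unique hTc' (f := fun i : Fin m' =>
    if h : (i : ℕ) < m then (Tᶜ.orderEmbOfFin hTc ⟨i, h⟩).castSucc else Fin.last n) ?_ ?_) i).symm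
  · intro i
    split_ifs
    · simp [Finset.mem_compl.mp (Finset.orderEmbOfFin_mem _ _ _)]
    · simp [Fin.castSucc_ne_last]
  · intro a b hab
    have hab : (a : ℕ) < b := hab
    dsimp only
    split_ifs with ha hb hb
    · exact Fin.castSucc_lt_castSucc_iff.mpr ((Tᶜ.orderEmbOfFin hTc).strictMono hab)
    · exact Fin.castSucc_lt_last _
    · omega
    · omega

def castSuccSubset (T : {T : Finset (Fin n) // T.card = s}) :
    {T : Finset (Fin (n + 1)) // T.card = s} :=
  ⟨T.1.map Fin.castSuccEmb, by rw [Finset.card_map, T.2]⟩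

lemma castSuccSubset_injective : Injective (castSuccSubset (n := n) (s := s)) :=
  fun _ _ h => Subtype.ext (Finset.map_injective _ (congrArg Subtype.val h))

lemma mem_range_castSuccSubset {T : {T : Finset (Fin (n + 1)) // T.card = s}}
    (h : Fin.last n ∉ T.1) : T ∈ Set.range castSuccSubset := by
  have hsub : T.1 ⊆ Finset.univ.map Fin.castSuccEmb := by
    intro x hx
    obtain ⟨y, rfl⟩ := Fin.exists_castSucc_eq.mpr (ne_of_mem_of_not_mem hx h)
    simp
  obtain ⟨U, -, hU⟩ := Finset.subset_map_iff.mp hsub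
  exact ⟨⟨U, by rw [← Finset.card_map Fin.castSuccEmb, ← hU, T.2]⟩, Subtype.ext hU.symm⟩

lemma sign_shuffle_castSuccSubset (T : {T : Finset (Fin n) // T.card = s}) :
    Perm.sign (shuffle (castSuccSubset T).1 (castSuccSubset T).2) =
      Perm.sign (shuffle T.1 T.2) := by
  refine Perm.sign_eq_of_castSucc _ _ fun k => ?_
  simp only [shuffle_apply, castSuccSubset, Fin.val_castSucc, orderEmbOfFin_map_castSuccEmb T.1 T.2,
    orderEmbOfFin_compl_map_castSuccEmb T.1 (card_compl_of_card_eq T.2)]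
  split_ifs <;> first | rfl | omega

end CastSucc

section Entries

variable {d s : ℕ}

-- For `s = 0` the truncated `s - 1` makes this drop the last entry of `β_{τ*}`.
def vdWLeftEntries (α : Fin (s - 1) → ℕ) (β : Fin (d + 1) → ℕ)
    (T : {T : Finset (Fin (d + 1)) // T.card = s}) : Fin d → ℕ :=
  fun k => if h : (k : ℕ) < s - 1 then α ⟨k, h⟩
    else β ((T.1)ᶜ.orderEmbOfFin (card_compl_of_card_eq T.2) ⟨k - (s - 1), by omega⟩)

def vdWRightEntries (β : Fin (d + 1) → ℕ) (γ : Fin (d - s) → ℕ)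
    (T : {T : Finset (Fin (d + 1)) // T.card = s}) : Fin d → ℕ :=
  fun k => if h : (k : ℕ) < s then β (T.1.orderEmbOfFin T.2 ⟨k, h⟩) else γ ⟨k - s, by omega⟩

lemma vdW_eq_sum (J : Finset ℕ) (α : Fin (s - 1) → ℕ) (β : Fin (d + 1) → ℕ)
    (γ : Fin (d - s) → ℕ) :
    vdW J d s α β γ = ∑ T, (Perm.sign (shuffle T.1 T.2) : ℤ) •
      (fbr J d (vdWLeftEntries α β T) * fbr J d (vdWRightEntries β γ T)) :=
  rfl

lemma vdWLeftEntries_castSuccSubset (hs : 1 ≤ s) (j : ℕ) (α : Fin (s - 1) → ℕ)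
    (β : Fin (d + 1) → ℕ) (T : {T : Finset (Fin (d + 1)) // T.card = s}) :
    vdWLeftEntries α (Fin.snoc β j) (castSuccSubset T) = Fin.snoc (vdWLeftEntries α β T) j := by
  have hsd : s ≤ d + 1 := T.2 ▸ T.1.card_le_univ.trans_eq (Fintype.card_fin _)
  funext k
  induction k using Fin.lastCases with
  | last =>
    rw [Fin.snoc_last, vdWLeftEntries, dif_neg (by simp; omega), castSuccSubset,
      orderEmbOfFin_compl_map_castSuccEmb T.1 (card_compl_of_card_eq T.2),
      dif_neg (by simp; omega), Fin.snoc_last]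
  | cast k =>
    rw [Fin.snoc_castSucc, vdWLeftEntries, vdWLeftEntries]
    simp only [Fin.val_castSucc]
    split_ifs
    · rfl
    · have hk : (k : ℕ) - (s - 1) < d + 1 - s := by have := k.isLt; omega
      rw [castSuccSubset, orderEmbOfFin_compl_map_castSuccEmb T.1 (card_compl_of_card_eq T.2),
        dif_pos hk, Fin.snoc_castSucc]

lemma vdWRightEntries_castSuccSubset (hsd : s ≤ d) (j : ℕ) (β : Fin (d + 1) → ℕ)
    (γ : Fin (d - s) → ℕ) (T : {T : Finset (Fin (d + 1)) // T.card = s}) :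
    vdWRightEntries (Fin.snoc β j) (fun k => if h : (k : ℕ) < d - s then γ ⟨k, h⟩ else j)
        (castSuccSubset T) = Fin.snoc (vdWRightEntries β γ T) j := by
  funext k
  induction k using Fin.lastCases with
  | last =>
    rw [Fin.snoc_last, vdWRightEntries, dif_neg (by simp; omega), dif_neg (by simp)]
  | cast k =>
    rw [Fin.snoc_castSucc, vdWRightEntries, vdWRightEntries]
    simp only [Fin.val_castSucc]
    split_ifs with hks hk
    · rw [castSuccSubset, orderEmbOfFin_map_castSuccEmb T.1 T.2, Fin.snoc_castSucc]
    · rfl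
    · have := k.isLt; omega

lemma fbr_vdWRightEntries_eq_zero (J : Finset ℕ) (β : Fin (d + 1) → ℕ) (γ : Fin (d - s) → ℕ)
    {T : {T : Finset (Fin (d + 1)) // T.card = s}} {t : Fin (d + 1)} (ht : t ∈ T.1)
    {i : Fin (d - s)} (h : β t = γ i) : fbr J d (vdWRightEntries β γ T) = 0 := by
  obtain ⟨a, rfl⟩ : t ∈ Set.range (T.1.orderEmbOfFin T.2) := by simpa using ht
  refine fbr_eq_zero_of_apply_eq _ (a := ⟨a, by have := i.isLt; omega⟩)
    (b := ⟨s + i, by have := i.isLt; omega⟩) (by simp [Fin.ext_iff]; omega) ?_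
  simp [vdWRightEntries, h]

end Entries

theorem lift_of_vanderWaerden_eq_vanderWaerden_general
    (d s : ℕ) (hs : 1 ≤ s) (hsd : s ≤ d)
    (J : Finset ℕ) (j : ℕ)
    (α : Fin (s - 1) → ℕ)
    (β : Fin (d + 1) → ℕ)
    (γ : Fin (d - s) → ℕ) :
    liftEta J d j (vdW J d s α β γ) =
      vdW (insert j J) (d + 1) s α
        (fun k => if h : (k : ℕ) < d + 1 then β ⟨(k : ℕ), h⟩ else j)
        (fun k => if h : (k : ℕ) < d - s then γ ⟨(k : ℕ), h⟩ else j) := by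
  rw [vdW_eq_sum, vdW_eq_sum, map_sum]
  refine Fintype.sum_of_injective castSuccSubset castSuccSubset_injective _ _
    (fun T hT => ?_) (fun T => ?_)
  · have hlast : Fin.last (d + 1) ∈ T.1 := by_contra fun h => hT (mem_range_castSuccSubset h)
    rw [fbr_vdWRightEntries_eq_zero _ _ _ hlast (i := ⟨d - s, by omega⟩) (by simp), mul_zero,
      smul_zero]
  · rw [map_zsmul, map_mul, liftEta_fbr, liftEta_fbr, ← vdWLeftEntries_castSuccSubset hs,
      ← vdWRightEntries_castSuccSubset hsd, ← sign_shuffle_castSuccSubset]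
    -- `Fin.snoc β j` unfolds to the `β'` of the statement
    rfl

theorem lift_of_vanderWaerden_eq_vanderWaerden
    (d s : ℕ) (hd : 1 ≤ d) (hs : 1 ≤ s) (hsd : s ≤ d)
    (J : Finset ℕ) (hJ : d ≤ J.card) (j : ℕ) (hj : j ∉ J)
    (α : Fin (s - 1) → ℕ) (hα : ∀ k, α k ∈ J)
    (β : Fin (d + 1) → ℕ) (hβ : ∀ k, β k ∈ J)
    (γ : Fin (d - s) → ℕ) (hγ : ∀ k, γ k ∈ J) :
    liftEta J d j (vdW J d s α β γ) =
      vdW (insert j J) (d + 1) s α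
        (fun k => if h : (k : ℕ) < d + 1 then β ⟨(k : ℕ), h⟩ else j)
        (fun k => if h : (k : ℕ) < d - s then γ ⟨(k : ℕ), h⟩ else j) :=
  lift_of_vanderWaerden_eq_vanderWaerden_general d s hs hsd J j α β γ
end

section
/- Fix a finite set $J \subset \mathbb{N}$, an integer $d$ with $1 \le d \le |J|$, and $j \in \mathbb{N} \setminus J$. If $p \in R_{J,d}$ satisfies $\phi_{J,d}(p) = 0$, then $\phi_{J\cup\{j\},\,d+1}(\eta_j(p)) = 0$. In other words, the lift of every syzygy is a syzygy: $\eta_j(\ker \phi_{J,d}) \subseteq \ker \phi_{J\cup\{j\},\,d+1}$. -/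
open MvPolynomial Matrix

theorem det_of_snoc_eq_mul_det_schur {K : Type*} [Field K] {n : ℕ}
    (M : Fin (n + 1) → Fin n → K) (v : Fin (n + 1) → K) (hv : v (Fin.last n) ≠ 0) :
    det (of fun i => (Fin.snoc (M i) (v i) : Fin (n + 1) → K)) =
      v (Fin.last n) * det (of fun i m =>
        M i.castSucc m - v i.castSucc * (v (Fin.last n))⁻¹ * M (Fin.last n) m) := by
  let _ : Invertible fun _ : Fin 1 => v (Fin.last n) :=
    ⟨fun _ => (v (Fin.last n))⁻¹, funext fun _ => inv_mul_cancel₀ hv,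
      funext fun _ => mul_inv_cancel₀ hv⟩
  let _ := diagonalInvertible fun _ : Fin 1 => v (Fin.last n)
  have hblocks : of (fun i => (Fin.snoc (M i) (v i) : Fin (n + 1) → K)) =
      (fromBlocks (of fun i m => M i.castSucc m) (of fun i _ => v i.castSucc)
        (of fun _ m => M (Fin.last n) m) (diagonal fun _ => v (Fin.last n))).submatrix
        finSumFinEquiv.symm finSumFinEquiv.symm := by
    ext i m
    induction i using Fin.lastCases <;> induction m using Fin.lastCases <;>
      simp [finSumFinEquiv_symm_last, finSumFinEquiv_symm_apply_castSucc]
  have hinv_eq : ⅟(fun _ : Fin 1 => v (Fin.last n)) = fun _ => (v (Fin.last n))⁻¹ := rfl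
  rw [hblocks, det_submatrix_equiv_self, det_fromBlocks₂₂, invOf_diagonal_eq, det_diagonal,
    Fin.prod_univ_one]
  congr 2
  ext i m
  simp [Matrix.mul_apply, hinv_eq]

theorem det_of_ite_zero_mul {R : Type*} [CommRing R] {n : ℕ} [NeZero n] (c : R)
    (A : Matrix (Fin n) (Fin n) R) :
    det (of fun i m => (if i = 0 then c else 1) * A i m) = c * det A := by
  have : of (fun i m => (if i = 0 then c else 1) * A i m) = updateRow A 0 (c • A 0) := by
    ext i m
    by_cases hi : i = 0 <;> simp [hi, updateRow_apply]
  rw [this, det_updateRow_smul, updateRow_eq_self]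

theorem genCoord_X (J : Finset ℕ) (d : ℕ) (S : {S : Finset ℕ // S ⊆ J ∧ S.card = d}) :
    genCoord J d (X S) = det (of fun i m : Fin d => X ((i : ℕ), S.1.orderEmbOfFin S.2.2 m)) :=
  aeval_X _ _

theorem liftEta_X (J : Finset ℕ) (d j : ℕ) (S : {S : Finset ℕ // S ⊆ J ∧ S.card = d}) :
    liftEta J d j (X S) = fbr (insert j J) (d + 1) (Fin.snoc (S.1.orderEmbOfFin S.2.2) j) :=
  aeval_X _ _

theorem genCoord_fbr (J : Finset ℕ) (d : ℕ) (lam : Fin d → ℕ)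
    (hinj : Function.Injective lam) (hmem : ∀ k, lam k ∈ J) :
    genCoord J d (fbr J d lam) = det (of fun i m : Fin d => X ((i : ℕ), lam m)) := by
  rw [fbr, dif_pos ⟨hinj, hmem⟩, map_zsmul, genCoord_X, zsmul_eq_mul, ← det_permute']
  congr 1
  ext i m
  simp [← Finset.coe_orderIsoOfFin_apply]

theorem genCoord_liftEta_X (J : Finset ℕ) (d : ℕ) {j : ℕ} (hj : j ∉ J)
    (S : {S : Finset ℕ // S ⊆ J ∧ S.card = d}) :
    genCoord (insert j J) (d + 1) (liftEta J d j (X S)) =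
      det (of fun i : Fin (d + 1) =>
        (Fin.snoc (fun m => X ((i : ℕ), S.1.orderEmbOfFin S.2.2 m)) (X ((i : ℕ), j)) :
          Fin (d + 1) → MvPolynomial (ℕ × ℕ) ℂ)) := by
  have hS : ∀ m, S.1.orderEmbOfFin S.2.2 m ∈ J := fun m => S.2.1 (S.1.orderEmbOfFin_mem S.2.2 m)
  rw [liftEta_X, genCoord_fbr]
  · exact congrArg det <| Matrix.ext fun i m =>
      congrFun (Fin.comp_snoc (fun k => (X ((i : ℕ), k) : MvPolynomial (ℕ × ℕ) ℂ)) _ j) m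
  · exact Fin.snoc_injective_iff.mpr
      ⟨(S.1.orderEmbOfFin S.2.2).injective, fun ⟨m, hm⟩ => hj (hm ▸ hS m)⟩
  · intro k
    induction k using Fin.lastCases <;> simp [hS]

local notation "𝒦" => FractionRing (MvPolynomial (ℕ × ℕ) ℂ)

noncomputable def fracX (i k : ℕ) : 𝒦 :=
  algebraMap (MvPolynomial (ℕ × ℕ) ℂ) 𝒦 (X (i, k))

theorem fracX_ne_zero (i k : ℕ) : fracX i k ≠ 0 :=
  (map_ne_zero_iff _ (IsFractionRing.injective (MvPolynomial (ℕ × ℕ) ℂ) 𝒦)).mpr (X_ne_zero _)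

noncomputable def schurSubst (d j : ℕ) : MvPolynomial (ℕ × ℕ) ℂ →ₐ[ℂ] 𝒦 :=
  aeval fun q => (if q.1 = 0 then fracX d j else 1) *
    (fracX q.1 q.2 - fracX q.1 j * (fracX d j)⁻¹ * fracX d q.2)

theorem algebraMap_genCoord_liftEta_X (J : Finset ℕ) {d : ℕ} (hd : 1 ≤ d) {j : ℕ} (hj : j ∉ J)
    (S : {S : Finset ℕ // S ⊆ J ∧ S.card = d}) :
    algebraMap (MvPolynomial (ℕ × ℕ) ℂ) 𝒦
        (genCoord (insert j J) (d + 1) (liftEta J d j (X S))) =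
      schurSubst d j (genCoord J d (X S)) := by
  have : NeZero d := ⟨by omega⟩
  set s := S.1.orderEmbOfFin S.2.2
  rw [genCoord_liftEta_X J d hj, genCoord_X]
  calc _ = det (of fun i : Fin (d + 1) =>
          (Fin.snoc (fun m => fracX i (s m)) (fracX i j) : Fin (d + 1) → 𝒦)) := by
        rw [RingHom.map_det]
        congr 1
        ext i m
        induction m using Fin.lastCases <;> simp [fracX, s]
    _ = fracX d j * det (of fun i m : Fin d =>
          fracX i (s m) - fracX i j * (fracX d j)⁻¹ * fracX d (s m)) := by
        rw [det_of_snoc_eq_mul_det_schur _ _ (by simpa using fracX_ne_zero d j)]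
        simp
    _ = det (of fun i m : Fin d => (if i = 0 then fracX d j else 1) *
          (fracX i (s m) - fracX i j * (fracX d j)⁻¹ * fracX d (s m))) :=
        (det_of_ite_zero_mul _ _).symm
    _ = _ := by
        rw [AlgHom.map_det]
        congr 1
        ext i m
        simp [schurSubst, Fin.val_eq_zero_iff, s]

theorem lift_of_syzygy_is_syzygy_general (J : Finset ℕ) (d : ℕ) (hd : 1 ≤ d)
    (j : ℕ) (hj : j ∉ J)
    (p : BracketRing J d) (hp : genCoord J d p = 0) :
    genCoord (insert j J) (d + 1) (liftEta J d j p) = 0 := by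
  have hcomm : (IsScalarTower.toAlgHom ℂ _ _).comp
      ((genCoord (insert j J) (d + 1)).comp (liftEta J d j)) =
      (schurSubst d j).comp (genCoord J d) :=
    algHom_ext fun S => algebraMap_genCoord_liftEta_X J hd hj S
  have hcomm_p := congrArg (· p) hcomm
  exact IsFractionRing.injective _ 𝒦 (by simpa [hp] using hcomm_p)

theorem lift_of_syzygy_is_syzygy (J : Finset ℕ) (d : ℕ) (hd : 1 ≤ d)
    (hJ : d ≤ J.card) (j : ℕ) (hj : j ∉ J)
    (p : BracketRing J d) (hp : genCoord J d p = 0) :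
    genCoord (insert j J) (d + 1) (liftEta J d j p) = 0 :=
  lift_of_syzygy_is_syzygy_general J d hd j hj p hp
end

section
/- Let $d \ge 3$ and let $v_1,\dots,v_{d+4} \in \mathbb{C}^{d+1}$. Fix a 6-element subset $I = \{i_1 < \cdots < i_6\}$ of $\{1,\dots,d+4\}$ with complement $I^c = \{j_1 < \cdots < j_{d-2}\}$, and abbreviate the index string $j_1 \cdots j_{d-2}$ by $J$. Then $[i_1 i_4 i_5\, J][i_2 i_5 i_6\, J][i_3 i_6 i_1\, J][i_2 i_3 i_4\, J] - [i_2 i_4 i_5\, J][i_3 i_5 i_6\, J][i_4 i_6 i_1\, J][i_1 i_2 i_3\, J] + [i_2 i_4 i_5\, J][i_3 i_5 i_6\, J][i_3 i_6 i_1\, J][i_1 i_2 i_4\, J] - [i_2 i_4 i_5\, J][i_2 i_5 i_6\, J][i_3 i_6 i_1\, J][i_1 i_3 i_4\, J] = 0$ if and only if $[i_1 i_2 i_3\, J][i_1 i_4 i_5\, J][i_2 i_4 i_6\, J][i_3 i_5 i_6\, J] - [i_1 i_2 i_4\, J][i_1 i_3 i_5\, J][i_2 i_3 i_6\, J][i_4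 i_5 i_6\, J] = 0$. -/
open Function

section TriCons

variable {α : Type*} {d : ℕ}

-- `cat3` for an arbitrary type, so that it can list vectors as well as indices.
def triCons (x y z : α) (u : Fin (d - 2) → α) : Fin (d + 1) → α := fun col =>
  if h : (col : ℕ) < 3 then ![x, y, z] ⟨col, h⟩
  else u ⟨(col : ℕ) - 3, by have := col.isLt; omega⟩

theorem comp_triCons {β : Type*} (f : α → β) (x y z : α) (u : Fin (d - 2) → α) :
    f ∘ triCons x y z u = triCons (f x) (f y) (f z) (f ∘ u) := by
  have hvec : ∀ k : Fin 3, f (![x, y, z] k) = ![f x, f y, f z] k := by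
    intro k; fin_cases k <;> rfl
  funext col
  simp only [comp_apply, triCons, apply_dite f, hvec]

theorem triCons_comp_swap₀₁ (hd : 2 ≤ d) (x y z : α) (u : Fin (d - 2) → α) :
    triCons x y z u ∘ Equiv.swap ⟨0, by omega⟩ ⟨1, by omega⟩ = triCons y x z u := by
  funext ⟨c, hc⟩
  rcases c with _ | _ | _ | c <;>
    simp [Equiv.swap_apply_def, triCons, Fin.ext_iff, Nat.lt_succ_iff]

theorem triCons_comp_swap₁₂ (hd : 2 ≤ d) (x y z : α) (u : Fin (d - 2) → α) :
    triCons x y z u ∘ Equiv.swap ⟨1, by omega⟩ ⟨2, by omega⟩ = triCons x z y u := by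
  funext ⟨c, hc⟩
  rcases c with _ | _ | _ | c <;>
    simp [Equiv.swap_apply_def, triCons, Fin.ext_iff, Nat.lt_succ_iff]

theorem update_triCons_one (hd : 2 ≤ d) (x y z : α) (u : Fin (d - 2) → α) (y' : α) :
    update (triCons x y z u) ⟨1, by omega⟩ y' = triCons x y' z u := by
  funext ⟨c, hc⟩
  rcases c with _ | _ | _ | c <;> simp [update, triCons, Fin.ext_iff, Nat.lt_succ_iff]

theorem update_triCons_two (hd : 2 ≤ d) (x y z : α) (u : Fin (d - 2) → α) (z' : α) :
    update (triCons x y z u) ⟨2, by omega⟩ z' = triCons x y z' u := by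
  funext ⟨c, hc⟩
  rcases c with _ | _ | _ | c <;> simp [update, triCons, Fin.ext_iff, Nat.lt_succ_iff]

theorem triCons_apply_eq_of_ne (x y z y' z' : α) (u : Fin (d - 2) → α) (k : Fin (d + 1))
    (h₁ : (k : ℕ) ≠ 1) (h₂ : (k : ℕ) ≠ 2) :
    triCons x y z u k = triCons x y' z' u k := by
  obtain ⟨c, hc⟩ := k
  rcases c with _ | _ | _ | c <;> simp_all [triCons, Nat.lt_succ_iff]

end TriCons

section Bracket

variable {R : Type*} [CommRing R] {d : ℕ}

noncomputable def bracket (u : Fin (d - 2) → Fin (d + 1) → R) (x y z : Fin (d + 1) → R) : R :=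
  Matrix.detRowAlternating (triCons x y z u)

theorem brk_cat3 {n : ℕ} (v : Fin n → Fin (d + 1) → ℂ) (a b c : Fin n)
    (j : Fin (d - 2) → Fin n) :
    brk v (cat3 a b c j) = bracket (v ∘ j) (v a) (v b) (v c) := by
  rw [bracket, ← comp_triCons]
  exact (Matrix.det_transpose _).symm

theorem Matrix.detRowAlternating_smul_eq_sum {n : Type*} [Fintype n] [DecidableEq n]
    (e : n → n → R) (b : n → R) :
    Matrix.detRowAlternating e • b = ∑ k, Matrix.detRowAlternating (update e k b) • e k := by
  have h := Matrix.mulVec_cramer (Matrix.of e).transpose b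
  rw [Matrix.det_transpose, Matrix.mulVec_transpose, Matrix.vecMul_eq_sum] at h
  simp_rw [Matrix.cramer_transpose_apply] at h
  exact h.symm

theorem bracket_swap₀₁ (hd : 2 ≤ d) (u : Fin (d - 2) → Fin (d + 1) → R)
    (x y z : Fin (d + 1) → R) : bracket u y x z = -bracket u x y z := by
  rw [bracket, ← triCons_comp_swap₀₁ hd]
  exact (Matrix.detRowAlternating (n := Fin (d + 1)) (R := R)).map_swap _ (by simp)

theorem bracket_swap₁₂ (hd : 2 ≤ d) (u : Fin (d - 2) → Fin (d + 1) → R)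
    (x y z : Fin (d + 1) → R) : bracket u x z y = -bracket u x y z := by
  rw [bracket, ← triCons_comp_swap₁₂ hd]
  exact (Matrix.detRowAlternating (n := Fin (d + 1)) (R := R)).map_swap _ (by simp)

theorem bracket_pluecker (hd : 2 ≤ d) (u : Fin (d - 2) → Fin (d + 1) → R)
    (x y z w t : Fin (d + 1) → R) :
    bracket u x y z * bracket u x w t - bracket u x y w * bracket u x z t
      + bracket u x y t * bracket u x z w = 0 := by
  let ψ := (Matrix.detRowAlternating (n := Fin (d + 1)) (R := R)).toMultilinearMap.toLinearMap
    (triCons x y 0 u) ⟨2, by omega⟩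
  have hψ (c) : ψ c = bracket u x y c := by
    simp only [ψ, MultilinearMap.toLinearMap_apply, update_triCons_two hd]; rfl
  have cramer := congrArg ψ (Matrix.detRowAlternating_smul_eq_sum (triCons x w t u) z)
  simp only [map_smul, map_sum] at cramer
  rw [Fintype.sum_eq_add ⟨1, by omega⟩ ⟨2, by omega⟩ (by simp [Fin.ext_iff])] at cramer
  · have h₁ : triCons x w t u ⟨1, by omega⟩ = w := rfl
    have h₂ : triCons x w t u ⟨2, by omega⟩ = t := rfl
    have h_det (a b c) : Matrix.detRowAlternating (triCons a b c u) = bracket u a b c := rfl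
    simp only [hψ, smul_eq_mul, h₁, h₂, update_triCons_one hd, update_triCons_two hd, h_det]
      at cramer
    rw [bracket_swap₁₂ hd u x z w] at cramer
    linear_combination cramer
  · rintro k ⟨hk₁, hk₂⟩
    rw [triCons_apply_eq_of_ne x w t y 0 u k (fun h => hk₁ (Fin.ext h)) (fun h => hk₂ (Fin.ext h))]
    simp only [ψ, MultilinearMap.toLinearMap_apply, AlternatingMap.coe_multilinearMap]
    rw [AlternatingMap.map_update_self _ _ (Ne.symm hk₂), smul_zero]

end Bracket

theorem expanded_add_standard_eq_zero {R : Type*} [CommRing R] (φ : Fin 6 → Fin 6 → Fin 6 → R)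
    (swap₀₁ : ∀ a b c, φ b a c = -φ a b c) (swap₁₂ : ∀ a b c, φ a c b = -φ a b c)
    (pluecker : ∀ x y z w t, φ x y z * φ x w t - φ x y w * φ x z t + φ x y t * φ x z w = 0) :
    (φ 0 3 4 * φ 1 4 5 * φ 2 5 0 * φ 1 2 3 - φ 1 3 4 * φ 2 4 5 * φ 3 5 0 * φ 0 1 2 +
        φ 1 3 4 * φ 2 4 5 * φ 2 5 0 * φ 0 1 3 - φ 1 3 4 * φ 1 4 5 * φ 2 5 0 * φ 0 2 3) +
      (φ 0 1 2 * φ 0 3 4 * φ 1 3 5 * φ 2 4 5 - φ 0 1 3 * φ 0 2 4 * φ 1 2 5 * φ 3 4 5) = 0 := by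
  -- Conditional forms of antisymmetry, with which `simp` sorts the arguments of every bracket.
  have sort₀₁ (a b c : Fin 6) (_ : b < a) : φ a b c = -φ b a c := swap₀₁ b a c
  have sort₁₂ (a b c : Fin 6) (_ : c < b) : φ a b c = -φ a c b := swap₁₂ a c b
  have R₁ := pluecker 0 1 3 2 5
  have R₂ := pluecker 3 4 0 1 2
  have R₃ := pluecker 1 3 0 4 5
  have R₄ := pluecker 0 1 2 3 4
  have R₅ := pluecker 5 2 4 1 3
  have R₆ := pluecker 2 0 3 4 5
  simp (disch := decide) only [sort₀₁, sort₁₂, neg_mul, mul_neg, neg_neg] at R₁ R₂ R₃ R₄ R₅ R₆ ⊢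
  linear_combination φ 1 3 4 * φ 2 4 5 * R₁ + φ 0 2 5 * φ 1 4 5 * R₂ + φ 0 2 3 * φ 2 4 5 * R₃
    + φ 1 3 5 * φ 2 4 5 * R₄ + φ 0 1 3 * φ 0 2 4 * R₅ + φ 0 1 3 * φ 1 4 5 * R₆

theorem expanded_gc_equation_iff_standard_equation_general (d : ℕ) (hd : 3 ≤ d)
    (v : Fin (d + 4) → Fin (d + 1) → ℂ)
    (i : Fin 6 → Fin (d + 4)) (j : Fin (d - 2) → Fin (d + 4)) :
    (brk v (cat3 (i 0) (i 3) (i 4) j) * brk v (cat3 (i 1) (i 4) (i 5) j) *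
          brk v (cat3 (i 2) (i 5) (i 0) j) * brk v (cat3 (i 1) (i 2) (i 3) j) -
        brk v (cat3 (i 1) (i 3) (i 4) j) * brk v (cat3 (i 2) (i 4) (i 5) j) *
          brk v (cat3 (i 3) (i 5) (i 0) j) * brk v (cat3 (i 0) (i 1) (i 2) j) +
        brk v (cat3 (i 1) (i 3) (i 4) j) * brk v (cat3 (i 2) (i 4) (i 5) j) *
          brk v (cat3 (i 2) (i 5) (i 0) j) * brk v (cat3 (i 0) (i 1) (i 3) j) -
        brk v (cat3 (i 1) (i 3) (i 4) j) * brk v (cat3 (i 1) (i 4) (i 5) j) *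
          brk v (cat3 (i 2) (i 5) (i 0) j) * brk v (cat3 (i 0) (i 2) (i 3) j) = 0) ↔
    (brk v (cat3 (i 0) (i 1) (i 2) j) * brk v (cat3 (i 0) (i 3) (i 4) j) *
          brk v (cat3 (i 1) (i 3) (i 5) j) * brk v (cat3 (i 2) (i 4) (i 5) j) -
        brk v (cat3 (i 0) (i 1) (i 3) j) * brk v (cat3 (i 0) (i 2) (i 4) j) *
          brk v (cat3 (i 1) (i 2) (i 5) j) * brk v (cat3 (i 3) (i 4) (i 5) j) = 0) := by
  have hd₂ : 2 ≤ d := by omega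
  have sum_eq_zero :=
    expanded_add_standard_eq_zero (fun a b c => brk v (cat3 (i a) (i b) (i c) j))
      (fun a b c => by simp only [brk_cat3]; exact bracket_swap₀₁ hd₂ _ _ _ _)
      (fun a b c => by simp only [brk_cat3]; exact bracket_swap₁₂ hd₂ _ _ _ _)
      (fun x y z w t => by simp only [brk_cat3]; exact bracket_pluecker hd₂ _ _ _ _ _ _)
  rw [add_eq_zero_iff_eq_neg.mp sum_eq_zero, neg_eq_zero]

theorem expanded_gc_equation_iff_standard_equation (d : ℕ) (hd : 3 ≤ d)
    (v : Fin (d + 4) → Fin (d + 1) → ℂ)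
    (i : Fin 6 → Fin (d + 4)) (j : Fin (d - 2) → Fin (d + 4))
    (hi : StrictMono i) (hj : StrictMono j)
    (hcompl : ∀ k : Fin (d + 4), (∃ a, i a = k) ↔ ¬ (∃ b, j b = k)) :
    (brk v (cat3 (i 0) (i 3) (i 4) j) * brk v (cat3 (i 1) (i 4) (i 5) j) *
          brk v (cat3 (i 2) (i 5) (i 0) j) * brk v (cat3 (i 1) (i 2) (i 3) j) -
        brk v (cat3 (i 1) (i 3) (i 4) j) * brk v (cat3 (i 2) (i 4) (i 5) j) *
          brk v (cat3 (i 3) (i 5) (i 0) j) * brk v (cat3 (i 0) (i 1) (i 2) j) +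
        brk v (cat3 (i 1) (i 3) (i 4) j) * brk v (cat3 (i 2) (i 4) (i 5) j) *
          brk v (cat3 (i 2) (i 5) (i 0) j) * brk v (cat3 (i 0) (i 1) (i 3) j) -
        brk v (cat3 (i 1) (i 3) (i 4) j) * brk v (cat3 (i 1) (i 4) (i 5) j) *
          brk v (cat3 (i 2) (i 5) (i 0) j) * brk v (cat3 (i 0) (i 2) (i 3) j) = 0) ↔
    (brk v (cat3 (i 0) (i 1) (i 2) j) * brk v (cat3 (i 0) (i 3) (i 4) j) *
          brk v (cat3 (i 1) (i 3) (i 5) j) * brk v (cat3 (i 2) (i 4) (i 5) j) -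
        brk v (cat3 (i 0) (i 1) (i 3) j) * brk v (cat3 (i 0) (i 2) (i 4) j) *
          brk v (cat3 (i 1) (i 2) (i 5) j) * brk v (cat3 (i 3) (i 4) (i 5) j) = 0) :=
  expanded_gc_equation_iff_standard_equation_general d hd v i j
end

section
/- Let $v_1,\dots,v_6 \in \mathbb{C}^3$. Then $[145][256][361][234] - [245][356][461][123] + [245][356][361][124] - [245][256][361][134] = 0$ if and only if $[123][145][246][356] - [124][135][236][456] = 0$. (The bracket expansion of the Grassmann–Cayley expression $(12 \wedge 45) \vee (23 \wedge 56) \vee (34 \wedge 61)$ is equivalent, after straightening, to the standard bracket equation for six points on a conic.) -/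
/-- The bracket `[k₁ k₂ k₃]`: the determinant of the `3 × 3` matrix whose columns are
`v k₁, v k₂, v k₃` in that order. -/
noncomputable def brk3 (v : Fin 6 → Fin 3 → ℂ) (k₁ k₂ k₃ : Fin 6) : ℂ :=
  Matrix.det (Matrix.of fun r c => v (![k₁, k₂, k₃] c) r)

theorem pascal_expansion_iff_standard (v : Fin 6 → Fin 3 → ℂ) :
    (brk3 v 0 3 4 * brk3 v 1 4 5 * brk3 v 2 5 0 * brk3 v 1 2 3 -
        brk3 v 1 3 4 * brk3 v 2 4 5 * brk3 v 3 5 0 * brk3 v 0 1 2 +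
        brk3 v 1 3 4 * brk3 v 2 4 5 * brk3 v 2 5 0 * brk3 v 0 1 3 -
        brk3 v 1 3 4 * brk3 v 1 4 5 * brk3 v 2 5 0 * brk3 v 0 2 3 = 0) ↔
    (brk3 v 0 1 2 * brk3 v 0 3 4 * brk3 v 1 3 5 * brk3 v 2 4 5 -
        brk3 v 0 1 3 * brk3 v 0 2 4 * brk3 v 1 2 5 * brk3 v 3 4 5 = 0) := by
  have key : brk3 v 0 3 4 * brk3 v 1 4 5 * brk3 v 2 5 0 * brk3 v 1 2 3 -
        brk3 v 1 3 4 * brk3 v 2 4 5 * brk3 v 3 5 0 * brk3 v 0 1 2 +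
        brk3 v 1 3 4 * brk3 v 2 4 5 * brk3 v 2 5 0 * brk3 v 0 1 3 -
        brk3 v 1 3 4 * brk3 v 1 4 5 * brk3 v 2 5 0 * brk3 v 0 2 3 =
      -(brk3 v 0 1 2 * brk3 v 0 3 4 * brk3 v 1 3 5 * brk3 v 2 4 5 -
        brk3 v 0 1 3 * brk3 v 0 2 4 * brk3 v 1 2 5 * brk3 v 3 4 5) := by
    simp only [brk3, Matrix.det_fin_three, Matrix.of_apply, Matrix.cons_val',
      Matrix.cons_val_zero, Matrix.cons_val_one, Matrix.head_cons, Matrix.empty_val',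
      Matrix.cons_val_fin_one, Matrix.cons_val_two, Matrix.tail_cons, Matrix.head_fin_const]
    ring
  rw [key, neg_eq_zero]
end

section
/- Let $v_1,\dots,v_6 \in \mathbb{C}^3$. Then there exists a nonzero homogeneous quadratic form $q$ on $\mathbb{C}^3$ with $q(v_i) = 0$ for all $i = 1,\dots,6$ if and only if $[123][145][246][356] = [124][135][236][456]$. -/
open MvPolynomial Finsupp Matrix

noncomputable def quadExponent : Fin 6 → (Fin 3 →₀ ℕ) :=
  ![single 0 2, single 1 2, single 2 2,
    single 0 1 + single 1 1, single 0 1 + single 2 1, single 1 1 + single 2 1]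

lemma degree_eq_fin_three (d : Fin 3 →₀ ℕ) : d.degree = d 0 + d 1 + d 2 := by
  rw [degree_eq_sum, Fin.sum_univ_three]

lemma degree_quadExponent (j : Fin 6) : (quadExponent j).degree = 2 := by
  fin_cases j <;> simp [degree_eq_fin_three, quadExponent]

lemma exists_quadExponent_eq {d : Fin 3 →₀ ℕ} (hd : d.degree = 2) : ∃ j, quadExponent j = d := by
  rw [degree_eq_fin_three] at hd
  have : (d 0 = 2 ∧ d 1 = 0 ∧ d 2 = 0) ∨ (d 0 = 0 ∧ d 1 = 2 ∧ d 2 = 0) ∨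
      (d 0 = 0 ∧ d 1 = 0 ∧ d 2 = 2) ∨ (d 0 = 1 ∧ d 1 = 1 ∧ d 2 = 0) ∨
      (d 0 = 1 ∧ d 1 = 0 ∧ d 2 = 1) ∨ (d 0 = 0 ∧ d 1 = 1 ∧ d 2 = 1) := by omega
  rcases this with h | h | h | h | h | h <;> [use 0; use 1; use 2; use 3; use 4; use 5] <;>
    ext i <;> fin_cases i <;> simp [quadExponent, h]

lemma quadExponent_injective : Function.Injective quadExponent := by
  intro a b h
  have h0 := DFunLike.congr_fun h 0
  have h1 := DFunLike.congr_fun h 1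
  fin_cases a <;> fin_cases b <;> first | rfl | simp [quadExponent] at h0 h1

section

variable {R ι : Type*} [CommRing R]

noncomputable def quadForm (c : Fin 6 → R) : MvPolynomial (Fin 3) R :=
  ∑ j, monomial (quadExponent j) (c j)

def veroneseVec (x : Fin 3 → R) : Fin 6 → R :=
  ![x 0 ^ 2, x 1 ^ 2, x 2 ^ 2, x 0 * x 1, x 0 * x 2, x 1 * x 2]

def veroneseMatrix (v : ι → Fin 3 → R) : Matrix ι (Fin 6) R :=
  Matrix.of fun k => veroneseVec (v k)

lemma coeff_quadExponent_quadForm (c : Fin 6 → R) (j : Fin 6) :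
    coeff (quadExponent j) (quadForm c) = c j := by
  simp [quadForm, coeff_sum, coeff_monomial, quadExponent_injective.eq_iff]

lemma quadForm_eq_zero_iff {c : Fin 6 → R} : quadForm c = 0 ↔ c = 0 :=
  ⟨fun h => funext fun j => by rw [← coeff_quadExponent_quadForm c j, h, coeff_zero, Pi.zero_apply],
    by rintro rfl; simp [quadForm]⟩

lemma isHomogeneous_quadForm (c : Fin 6 → R) : (quadForm c).IsHomogeneous 2 :=
  IsHomogeneous.sum _ _ _ fun j _ => isHomogeneous_monomial _ (degree_quadExponent j)

lemma MvPolynomial.IsHomogeneous.eq_quadForm {q : MvPolynomial (Fin 3) R}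
    (hq : q.IsHomogeneous 2) : q = quadForm fun j => coeff (quadExponent j) q := by
  ext d
  by_cases hd : d.degree = 2
  · obtain ⟨j, rfl⟩ := exists_quadExponent_eq hd
    rw [coeff_quadExponent_quadForm]
  · rw [hq.coeff_eq_zero hd, quadForm, coeff_sum]
    refine (Finset.sum_eq_zero fun j _ => ?_).symm
    rw [coeff_monomial, if_neg]
    rintro rfl
    exact hd (degree_quadExponent j)

lemma eval_monomial_quadExponent (x : Fin 3 → R) (j : Fin 6) (a : R) :
    eval x (monomial (quadExponent j) a) = a * veroneseVec x j := by
  rw [eval_monomial, prod_fintype _ _ fun _ => pow_zero _, Fin.prod_univ_three]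
  fin_cases j <;> simp [quadExponent, veroneseVec]

lemma veroneseMatrix_mulVec_apply (v : ι → Fin 3 → R) (c : Fin 6 → R) (k : ι) :
    (veroneseMatrix v *ᵥ c) k = eval (v k) (quadForm c) := by
  simp only [quadForm, map_sum, eval_monomial_quadExponent, mulVec, dotProduct, veroneseMatrix,
    of_apply, mul_comm]

theorem exists_conic_iff_exists_mulVec_eq_zero (v : ι → Fin 3 → R) :
    (∃ q : MvPolynomial (Fin 3) R, q ≠ 0 ∧ q.IsHomogeneous 2 ∧ ∀ k, eval (v k) q = 0) ↔
      ∃ c ≠ 0, veroneseMatrix v *ᵥ c = 0 := by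
  constructor
  · rintro ⟨q, hq0, hq, hv⟩
    refine ⟨fun j => coeff (quadExponent j) q, fun hc => hq0 ?_, funext fun k => ?_⟩
    · rw [hq.eq_quadForm, quadForm_eq_zero_iff.mpr hc]
    · rw [Pi.zero_apply, veroneseMatrix_mulVec_apply, ← hq.eq_quadForm, hv k]
  · rintro ⟨c, hc0, hc⟩
    refine ⟨quadForm c, quadForm_eq_zero_iff.not.mpr hc0, isHomogeneous_quadForm c, fun k => ?_⟩
    rw [← veroneseMatrix_mulVec_apply, hc, Pi.zero_apply]

end

set_option maxHeartbeats 1000000 in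
theorem det_veroneseMatrix (v : Fin 6 → Fin 3 → ℂ) :
    (veroneseMatrix v).det =
      brk3 v 0 1 3 * brk3 v 0 2 4 * brk3 v 1 2 5 * brk3 v 3 4 5 -
        brk3 v 0 1 2 * brk3 v 0 3 4 * brk3 v 1 3 5 * brk3 v 2 4 5 := by
  simp only [det_succ_row_zero (n := 5), det_succ_row_zero (n := 4), det_succ_row_zero (n := 3),
    det_fin_three, Fin.sum_univ_succ, Fin.sum_univ_zero, brk3]
  simp [veroneseMatrix, veroneseVec, Fin.succAbove, Fin.lt_def]
  ring

theorem conic_iff_bracket_equation (v : Fin 6 → Fin 3 → ℂ) :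
    (∃ q : MvPolynomial (Fin 3) ℂ, q ≠ 0 ∧ q.IsHomogeneous 2 ∧
        ∀ k : Fin 6, MvPolynomial.eval (v k) q = 0) ↔
      brk3 v 0 1 2 * brk3 v 0 3 4 * brk3 v 1 3 5 * brk3 v 2 4 5 =
        brk3 v 0 1 3 * brk3 v 0 2 4 * brk3 v 1 2 5 * brk3 v 3 4 5 := by
  rw [exists_conic_iff_exists_mulVec_eq_zero, exists_mulVec_eq_zero_iff, det_veroneseMatrix,
    sub_eq_zero, eq_comm]
end
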